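/- arXiv:1707.08947 — 2 statements merged into one kernel-verified Lean document; each statement's English description precedes it below -/
import Mathlib

section
/- Under the hypotheses 0 < q < 1 and |ω| > R (with R bounding |g| as above), one has the uniform estimate sup_{l∈ℤ} (1+|l|)/|ν_l(q)| ≤ (q̃ + 1/(1-q)) / (|ω| − R), where q̃ = 1/q for 0 < q < 1/2 and q̃ = 1/(1-q) for 1/2 ≤ q < 1. -/
/-!
Since `0 < q < 1`, the point `q + l` stays away from `0` proportionally to `1 + |l|`:
`(1 + |l|) / |q + l|` is at most `1/q` for `l ≥ 0` and at most `2/(1-q)` for `l ≤ -1`,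
both bounded by `q̃ + 1/(1-q)` because `q̃ = max (1/q) (1/(1-q))`. On the other hand the
linear growth bound on the perturbation gives `|ν_l(q)| ≥ (|ω| - R) |q + l|`.
-/

lemma add_intCast_ne_zero {q : ℝ} (hq0 : 0 < q) (hq1 : q < 1) (l : ℤ) : q + l ≠ 0 := by
  rcases le_or_gt 0 l with hl | hl
  · have : (0 : ℝ) ≤ l := by exact_mod_cast hl
    linarith
  · have : (l : ℝ) ≤ -1 := by exact_mod_cast Int.le_sub_one_of_lt hl
    linarith

lemma one_add_abs_div_abs_add_intCast_le {q : ℝ} (hq0 : 0 < q) (hq1 : q < 1) (l : ℤ) :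
    (1 + |(l : ℝ)|) / |q + l| ≤ max (1 / q) (2 / (1 - q)) := by
  have h1q : 0 < 1 - q := by linarith
  rcases le_or_gt 0 l with hl | hl
  · have hl' : (0 : ℝ) ≤ l := by exact_mod_cast hl
    rw [abs_of_nonneg hl', abs_of_pos (by linarith), div_le_iff₀ (by linarith)]
    calc 1 + (l : ℝ) ≤ 1 / q * (q + l) := by
          rw [div_mul_eq_mul_div, le_div_iff₀ hq0]; nlinarith
      _ ≤ _ := by gcongr; exact le_max_left _ _
  · have hl' : (l : ℝ) ≤ -1 := by exact_mod_cast Int.le_sub_one_of_lt hl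
    rw [abs_of_neg (by linarith), abs_of_neg (by linarith), div_le_iff₀ (by linarith)]
    calc 1 + -(l : ℝ) ≤ 2 / (1 - q) * -(q + l) := by
          rw [div_mul_eq_mul_div, le_div_iff₀ h1q]; nlinarith
      _ ≤ _ := by
          gcongr
          · linarith
          · exact le_max_right _ _

lemma sub_mul_abs_le_abs_mul_add {ω R x g : ℝ} (hg : |g| ≤ R * |x|) :
    (|ω| - R) * |x| ≤ |ω * x + g| := by
  have h := abs_sub_abs_le_abs_add (ω * x) g
  rw [abs_mul] at h
  linarith

theorem stmt4_general (q ω R : ℝ) (hq0 : 0 < q) (hq1 : q < 1) (Nc : ℕ) (κ : ℕ → ℝ)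
    (hR : ∀ l : ℤ,
      |4 * ∑ j ∈ Finset.Icc 1 Nc, κ j * Real.sin ((q + l) * j / 2) ^ 2| ≤ R * |q + l|)
    (hω : R < |ω|)
    (qt : ℝ) (hqt : (0 < q ∧ q < 1/2 → qt = 1/q) ∧ (1/2 ≤ q ∧ q < 1 → qt = 1/(1-q))) :
    ∀ l : ℤ,
      (1 + |(l : ℝ)|) /
        |ω * (q + l) + 4 * ∑ j ∈ Finset.Icc 1 Nc, κ j * Real.sin ((q + l) * j / 2) ^ 2|
      ≤ (qt + 1/(1-q)) / (|ω| - R) := by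
  intro l
  have hx : 0 < |q + l| := abs_pos.mpr (add_intCast_ne_zero hq0 hq1 l)
  have hqt_ge : 1 / q ≤ qt ∧ 1 / (1 - q) ≤ qt := by
    rcases lt_or_ge q (1/2) with h | h
    · rw [hqt.1 ⟨hq0, h⟩]
      exact ⟨le_rfl, one_div_le_one_div_of_le hq0 (by linarith)⟩
    · rw [hqt.2 ⟨h, hq1⟩]
      exact ⟨one_div_le_one_div_of_le (by linarith) (by linarith), le_rfl⟩
  have hkey : (1 + |(l : ℝ)|) / |q + l| ≤ qt + 1 / (1 - q) := by
    refine (one_add_abs_div_abs_add_intCast_le hq0 hq1 l).trans (max_le ?_ ?_)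
    · linarith [one_div_pos.mpr (show 0 < 1 - q by linarith)]
    · linarith [show 2 / (1 - q) = 1 / (1 - q) + 1 / (1 - q) by ring]
  calc _ ≤ (1 + |(l : ℝ)|) / ((|ω| - R) * |q + l|) :=
        div_le_div_of_nonneg_left (by positivity) (mul_pos (by linarith) hx)
          (sub_mul_abs_le_abs_mul_add (hR l))
    _ = (1 + |(l : ℝ)|) / |q + l| / (|ω| - R) := by rw [mul_comm, div_div]
    _ ≤ _ := by gcongr

theorem stmt4 (q ω R : ℝ) (hq0 : 0 < q) (hq1 : q < 1) (Nc : ℕ) (κ : ℕ → ℝ)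
    (hR0 : 0 ≤ R)
    (hR : ∀ l : ℤ,
      |4 * ∑ j ∈ Finset.Icc 1 Nc, κ j * Real.sin ((q + l) * j / 2) ^ 2| ≤ R * |q + l|)
    (hω : R < |ω|)
    (qt : ℝ) (hqt : (0 < q ∧ q < 1/2 → qt = 1/q) ∧ (1/2 ≤ q ∧ q < 1 → qt = 1/(1-q))) :
    ∀ l : ℤ,
      (1 + |(l : ℝ)|) /
        |ω * (q + l) + 4 * ∑ j ∈ Finset.Icc 1 Nc, κ j * Real.sin ((q + l) * j / 2) ^ 2|
      ≤ (qt + 1/(1-q)) / (|ω| - R) :=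
  stmt4_general q ω R hq0 hq1 Nc κ hR hω qt hqt
end

section
/- Suppose Φ ∈ C¹ is a 2π-periodic solution of -iωΦ'(u) + ωqΦ(u) = Σ_{j=1}^{N_c} κ_j[Φ(u+j)e^{iqj} − 2Φ(u) + Φ(u−j)e^{-iqj}] + F(|Φ(u)|²)Φ(u), with sup|Φ| ≤ P^{1/2}, |F(x)| ≤ a(1+x^b), and |ω| ≥ R > 0 where 0 < q < 1. Then sup |Φ'(u)| ≤ (q + (4κ̄ + a(1+P^b))/R) · P^{1/2}, where κ̄ = Σ_{j=1}^{N_c} κ_j and all κ_j ≥ 0. -/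
/-!
Rearranging the equation isolates `-iω Φ'(u)`, so `|ω| ‖Φ'(u)‖` is at most the sum of the norms of
the remaining terms. Each coupling term is at most `4 κ_j P^{1/2}` because the phases `e^{±iqj}` have
modulus one, the nonlinear term is at most `a (1 + P^b) P^{1/2}` by the growth bound on `F` at
`|Φ(u)|² ≤ P`, and `‖ωq Φ(u)‖ ≤ |ω| q P^{1/2}`. Dividing by `|ω| ≥ R` gives the claim.
-/

open Complex

lemma norm_mul_sub_two_mul_add_mul_le {x y z w w' : ℂ} {M : ℝ} (hx : ‖x‖ ≤ M) (hy : ‖y‖ ≤ M)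
    (hz : ‖z‖ ≤ M) (hw : ‖w‖ = 1) (hw' : ‖w'‖ = 1) :
    ‖x * w - 2 * y + z * w'‖ ≤ 4 * M :=
  calc ‖x * w - 2 * y + z * w'‖ ≤ ‖x * w‖ + ‖2 * y‖ + ‖z * w'‖ := by
        grw [norm_add_le, norm_sub_le]
    _ = ‖x‖ + 2 * ‖y‖ + ‖z‖ := by simp [hw, hw']
    _ ≤ 4 * M := by linarith

lemma norm_sum_ofReal_mul_le {ι : Type*} (s : Finset ι) {κ : ι → ℝ} (hκ : ∀ j ∈ s, 0 ≤ κ j)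
    {f : ι → ℂ} {B : ℝ} (hf : ∀ j ∈ s, ‖f j‖ ≤ B) :
    ‖∑ j ∈ s, (κ j : ℂ) * f j‖ ≤ (∑ j ∈ s, κ j) * B := by
  rw [Finset.sum_mul]
  refine (norm_sum_le _ _).trans (Finset.sum_le_sum fun j hj => ?_)
  rw [norm_mul, norm_real, Real.norm_of_nonneg (hκ j hj)]
  exact mul_le_mul_of_nonneg_left (hf j hj) (hκ j hj)

lemma abs_le_of_abs_le_mul_one_add_rpow {F : ℝ → ℝ} {a b P : ℝ} (ha : 0 ≤ a) (hb : 0 ≤ b)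
    (hF : ∀ x, 0 ≤ x → |F x| ≤ a * (1 + x ^ b)) {x : ℝ} (hx : 0 ≤ x) (hxP : x ≤ P) :
    |F x| ≤ a * (1 + P ^ b) := by
  grw [hF x hx, Real.rpow_le_rpow hx hxP hb]

lemma abs_mul_norm_le_of_neg_I_mul_add_eq {ω : ℝ} {d z w : ℂ} (h : -(I * ω) * d + z = w) :
    |ω| * ‖d‖ ≤ ‖w‖ + ‖z‖ := by
  have hd : -(I * ω) * d = w - z := by rw [← h]; ring
  calc |ω| * ‖d‖ = ‖-(I * ω) * d‖ := by simp
    _ = ‖w - z‖ := by rw [hd]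
    _ ≤ ‖w‖ + ‖z‖ := norm_sub_le w z

lemma le_add_div_of_abs_mul_le_add {ω R A x c : ℝ} (hR : 0 < R) (hω : R ≤ |ω|) (hA : 0 ≤ A)
    (h : |ω| * x ≤ A + |ω| * c) : x ≤ c + A / R := by
  have hx : x - c ≤ A / |ω| := by
    rw [le_div_iff₀ (hR.trans_le hω)]
    linarith
  linarith [div_le_div_of_nonneg_left hA hR hω]

theorem stmt9_general (ω q R a b P : ℝ) (hR : 0 < R) (hω : R ≤ |ω|)
    (hq0 : 0 < q) (ha : 0 < a) (hb : 0 < b) (hP : 0 < P)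
    (Nc : ℕ) (κ : ℕ → ℝ) (hκ : ∀ j, 0 ≤ κ j)
    (F : ℝ → ℝ)
    (hF : ∀ x : ℝ, 0 ≤ x → |F x| ≤ a * (1 + x ^ b))
    (Φ : ℝ → ℂ)
    (hbd : ∀ u, ‖Φ u‖ ≤ P ^ ((1 : ℝ)/2))
    (heq : ∀ u : ℝ,
      -(I * ω) * deriv Φ u + (ω * q : ℝ) * Φ u
        = ∑ j ∈ Finset.Icc 1 Nc, (κ j : ℂ) *
            (Φ (u + j) * Complex.exp (I * q * j) - 2 * Φ u
              + Φ (u - j) * Complex.exp (-(I * q * j)))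
          + (F (‖Φ u‖ ^ 2) : ℂ) * Φ u) :
    ∀ u : ℝ, ‖deriv Φ u‖ ≤
      (q + (4 * (∑ j ∈ Finset.Icc 1 Nc, κ j) + a * (1 + P ^ b)) / R) * P ^ ((1 : ℝ)/2) := by
  intro u
  set M := P ^ ((1 : ℝ)/2)
  have hnormΦ_sq : ‖Φ u‖ ^ 2 ≤ P :=
    (Real.le_sqrt (norm_nonneg _) hP.le).1 (Real.sqrt_eq_rpow P ▸ hbd u)
  have hphase (t : ℕ) : ‖exp (I * q * t)‖ = 1 ∧ ‖exp (-(I * q * t))‖ = 1 := by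
    simp [norm_exp]
  have hcoupling := norm_sum_ofReal_mul_le (Finset.Icc 1 Nc) (fun j _ => hκ j) fun j _ =>
    norm_mul_sub_two_mul_add_mul_le (hbd (u + j)) (hbd u) (hbd (u - j)) (hphase j).1 (hphase j).2
  have hnonlinear : ‖(F (‖Φ u‖ ^ 2) : ℂ) * Φ u‖ ≤ a * (1 + P ^ b) * M := by
    rw [norm_mul, norm_real, Real.norm_eq_abs]
    exact mul_le_mul (abs_le_of_abs_le_mul_one_add_rpow ha.le hb.le hF (by positivity) hnormΦ_sq)
      (hbd u) (norm_nonneg _) (by positivity)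
  have hlinear : ‖((ω * q : ℝ) : ℂ) * Φ u‖ ≤ |ω| * (q * M) := by
    rw [norm_mul, norm_real, Real.norm_eq_abs, abs_mul, abs_of_pos hq0, mul_assoc]
    gcongr
    exact hbd u
  set K := ∑ j ∈ Finset.Icc 1 Nc, κ j
  have hK : 0 ≤ K := Finset.sum_nonneg fun j _ => hκ j
  have hbound : |ω| * ‖deriv Φ u‖ ≤ (4 * K + a * (1 + P ^ b)) * M + |ω| * (q * M) := by
    grw [abs_mul_norm_le_of_neg_I_mul_add_eq (heq u), norm_add_le, hcoupling, hnonlinear, hlinear]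
    linarith
  calc ‖deriv Φ u‖ ≤ q * M + (4 * K + a * (1 + P ^ b)) * M / R :=
        le_add_div_of_abs_mul_le_add hR hω (by positivity) hbound
    _ = (q + (4 * K + a * (1 + P ^ b)) / R) * M := by ring

theorem stmt9 (ω q R a b P : ℝ) (hR : 0 < R) (hω : R ≤ |ω|)
    (hq0 : 0 < q) (hq1 : q < 1) (ha : 0 < a) (hb : 0 < b) (hP : 0 < P)
    (Nc : ℕ) (κ : ℕ → ℝ) (hκ : ∀ j, 0 ≤ κ j)
    (F : ℝ → ℝ) (hFc : ContinuousOn F (Set.Ici 0))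
    (hF : ∀ x : ℝ, 0 ≤ x → |F x| ≤ a * (1 + x ^ b))
    (Φ : ℝ → ℂ) (hΦ : ContDiff ℝ 1 Φ) (hper : ∀ u, Φ (u + 2 * Real.pi) = Φ u)
    (hbd : ∀ u, ‖Φ u‖ ≤ P ^ ((1 : ℝ)/2))
    (heq : ∀ u : ℝ,
      -(I * ω) * deriv Φ u + (ω * q : ℝ) * Φ u
        = ∑ j ∈ Finset.Icc 1 Nc, (κ j : ℂ) *
            (Φ (u + j) * Complex.exp (I * q * j) - 2 * Φ u
              + Φ (u - j) * Complex.exp (-(I * q * j)))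
          + (F (‖Φ u‖ ^ 2) : ℂ) * Φ u) :
    ∀ u : ℝ, ‖deriv Φ u‖ ≤
      (q + (4 * (∑ j ∈ Finset.Icc 1 Nc, κ j) + a * (1 + P ^ b)) / R) * P ^ ((1 : ℝ)/2) :=
  stmt9_general ω q R a b P hR hω hq0 ha hb hP Nc κ hκ F hF Φ hbd heq
end
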